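/- For an expanded real number x that is finite (not infinite), x must be real; hence every finite element of the expanded reals equals its standard part. -/
import Mathlib
open Filter Polynomial

noncomputable instance : Algebra ℝ ℝ* := RingHom.toAlgebra
  { toFun := (↑· : ℝ → ℝ*), map_one' := Hyperreal.coe_one, map_mul' := Hyperreal.coe_mul,
    map_zero' := Hyperreal.coe_zero, map_add' := Hyperreal.coe_add }

lemma aux_ofSeq (p : Polynomial ℝ) :
    Polynomial.aeval Hyperreal.omega p = Hyperreal.ofSeq (fun n => p.eval (n : ℝ)) := by
  induction p using Polynomial.induction_on' with
  | add p q hp hq =>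
      simp only [map_add, hp, hq, eval_add]
      rfl
  | monomial n a =>
      simp only [aeval_monomial, eval_monomial]
      show (a : ℝ*) * Hyperreal.omega ^ n = _
      rfl

theorem stmt_8 (p : Polynomial ℝ) (x : ℝ*) (hx : x = Polynomial.aeval Hyperreal.omega p)
    (hfin : ¬ Hyperreal.Infinite x) :
    (∃ r : ℝ, x = (r : ℝ*)) ∧ x = ((Hyperreal.st x : ℝ) : ℝ*) := by
  have hex : ∃ r : ℝ, x = (r : ℝ*) := by
    rcases le_or_gt p.degree 0 with hd | hd
    · refine ⟨p.coeff 0, ?_⟩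
      rw [hx, Polynomial.eq_C_of_degree_le_zero hd]
      simp [Polynomial.aeval_C]
      rfl
    · exfalso
      apply hfin
      rw [hx, aux_ofSeq]
      rcases le_or_gt 0 p.leadingCoeff with hc | hc
      · exact Or.inl <| Hyperreal.infinitePos_of_tendsto_top <|
          (p.tendsto_atTop_of_leadingCoeff_nonneg hd hc).comp tendsto_natCast_atTop_atTop
      · exact Or.inr <| Hyperreal.infiniteNeg_of_tendsto_bot <|
          (p.tendsto_atBot_of_leadingCoeff_nonpos hd hc.le).comp tendsto_natCast_atTop_atTop
  refine ⟨hex, ?_⟩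
  obtain ⟨r, rfl⟩ := hex
  rw [(Hyperreal.isSt_refl_real r).st_eq]
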